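/- Let n, p be positive integers, δ > 0, S̄ ⊆ {1,…,p}, and x_1,…,x_n ∈ ℝ^p, β ∈ ℝ^p with β ≠ 0, Δ ∈ ℝ^p, k ∈ {1,…,p}. Let w_k(β) = −(1/2)(‖β‖₂² I + 2ββᵀ)^{-1} e_k, and suppose supp(Δ) ⊆ S̄, supp(w_k(β)) ⊆ S̄, supp(β) ⊆ S̄. If the operator norm bound ‖ (1/n) Σ_{j=1}^n (x_jᵀβ)² x_{j,S̄} x_{j,S̄}ᵀ − (‖β‖₂² I_{S̄} + 2ββᵀ) ‖ ≤ δ‖β‖₂² holds, then | e_kᵀΔ + (2/n) Σ_{j=1}^n (x_jᵀΔ)(x_jᵀ w_k(β))(x_jᵀβ)² | ≤ 2δ ‖β‖₂² ‖Δ‖₂ ‖w_k(β)‖₂. -/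

import Mathlib

open MeasureTheory ProbabilityTheory

noncomputable section

/-- Euclidean dot product on `ℝ^p`. -/
def dot {p : ℕ} (u v : Fin p → ℝ) : ℝ := ∑ i, u i * v i

/-- Euclidean norm on `ℝ^p`. -/
def nrm {p : ℕ} (v : Fin p → ℝ) : ℝ := Real.sqrt (∑ i, (v i)^2)

/-- The matrix `‖b‖₂² I + 2 b bᵀ` (population Fisher information / Hessian). -/
def fisherM {p : ℕ} (b : Fin p → ℝ) : Matrix (Fin p) (Fin p) ℝ :=
  (nrm b ^ 2) • (1 : Matrix (Fin p) (Fin p) ℝ) + (2:ℝ) • Matrix.vecMulVec b b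

/-- The correction direction `w_k(b) = -(1/2) (‖b‖₂² I + 2 b bᵀ)⁻¹ e_k`. -/
def wvec {p : ℕ} (b : Fin p → ℝ) (k : Fin p) : Fin p → ℝ :=
  (-(1/2) : ℝ) • (fisherM b)⁻¹.mulVec (Pi.single k 1)

/-- Operator (spectral) norm of a matrix acting on Euclidean space. -/
def opNorm {p : ℕ} (A : Matrix (Fin p) (Fin p) ℝ) : ℝ :=
  ‖LinearMap.toContinuousLinearMap (Matrix.toEuclideanLin A)‖

/-- Restriction of a vector to a coordinate set `S` (zero outside `S`). -/
def restr {p : ℕ} (S : Finset (Fin p)) (v : Fin p → ℝ) : Fin p → ℝ :=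
  fun i => if i ∈ S then v i else 0

/-- Gradient of the phase-retrieval objective
`f(b) = (1/(4n)) ∑ⱼ ((xⱼᵀb)² - yⱼ)²`, namely
`∇f(b) = (1/n) ∑ⱼ ((xⱼᵀb)² - yⱼ)(xⱼᵀb) xⱼ`. -/
def gradf {p n : ℕ} (x : Fin n → Fin p → ℝ) (y : Fin n → ℝ) (b : Fin p → ℝ) : Fin p → ℝ :=
  (1/(n:ℝ)) • ∑ j, (((dot (x j) b)^2 - y j) * dot (x j) b) • x j

/-!
Since `Δ` and `w = w_k(β)` are supported on `S̄`, the restriction to `S̄` is invisible in both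
quadratic forms: `Δᵀ(‖β‖² I_S̄ + 2ββᵀ) w = Δᵀ(‖β‖² I + 2ββᵀ) w = -Δ_k / 2` by the definition of
`w`, and `Δᵀ Ĥ w = (1/n) ∑ⱼ (xⱼᵀΔ)(xⱼᵀw)(xⱼᵀβ)²` for the restricted empirical Hessian `Ĥ`.
So the quantity to bound is `2 Δᵀ(Ĥ - (‖β‖² I_S̄ + 2ββᵀ)) w`, and Cauchy–Schwarz with the
operator norm finishes.
-/

open Matrix

lemma nrm_eq_norm_toLp {p : ℕ} (v : Fin p → ℝ) : nrm v = ‖WithLp.toLp 2 v‖ := by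
  simp [nrm, EuclideanSpace.norm_eq]

lemma nrm_nonneg {p : ℕ} (v : Fin p → ℝ) : 0 ≤ nrm v := Real.sqrt_nonneg _

lemma nrm_pos {p : ℕ} {v : Fin p → ℝ} (hv : v ≠ 0) : 0 < nrm v := by
  rw [nrm_eq_norm_toLp, norm_pos_iff]
  simpa using hv

lemma abs_dotProduct_mulVec_le_opNorm {p : ℕ} (A : Matrix (Fin p) (Fin p) ℝ)
    (u v : Fin p → ℝ) : |u ⬝ᵥ A *ᵥ v| ≤ opNorm A * nrm u * nrm v := by
  have hinner :
      u ⬝ᵥ A *ᵥ v = inner ℝ (WithLp.toLp 2 u) (toEuclideanLin A (WithLp.toLp 2 v)) := by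
    rw [dotProduct_comm]; rfl
  rw [hinner, nrm_eq_norm_toLp, nrm_eq_norm_toLp, mul_right_comm]
  refine (abs_real_inner_le_norm _ _).trans ?_
  rw [mul_comm]
  gcongr
  exact (LinearMap.toContinuousLinearMap (toEuclideanLin A)).le_opNorm _

lemma fisherM_posDef {p : ℕ} {b : Fin p → ℝ} (hb : b ≠ 0) : (fisherM b).PosDef :=
  (PosDef.one.smul (pow_pos (nrm_pos hb) 2)).add_posSemidef
    ((posSemidef_vecMulVec_self_star b).smul zero_le_two)

lemma fisherM_mulVec_wvec {p : ℕ} {b : Fin p → ℝ} (hb : b ≠ 0) (k : Fin p) :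
    fisherM b *ᵥ wvec b k = (-(1 / 2) : ℝ) • Pi.single k 1 := by
  rw [wvec, mulVec_smul, mulVec_mulVec,
    mul_nonsing_inv _ ((isUnit_iff_isUnit_det _).mp (fisherM_posDef hb).isUnit), one_mulVec]

lemma dot_eq_dotProduct {p : ℕ} (u v : Fin p → ℝ) : dot u v = u ⬝ᵥ v := rfl

lemma restr_eq_self {p : ℕ} {S : Finset (Fin p)} {v : Fin p → ℝ}
    (hv : Function.support v ⊆ S) : restr S v = v := by
  funext i
  by_cases hi : i ∈ S
  · simp [restr, hi]
  · simp [restr, hi, Function.notMem_support.mp (fun h => hi (hv h))]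

lemma restr_dotProduct {p : ℕ} (S : Finset (Fin p)) (u v : Fin p → ℝ) :
    restr S u ⬝ᵥ v = u ⬝ᵥ restr S v := by
  refine Finset.sum_congr rfl fun i _ => ?_
  by_cases hi : i ∈ S <;> simp [restr, hi]

lemma diagonal_indicator_mulVec {p : ℕ} (S : Finset (Fin p)) (v : Fin p → ℝ) :
    diagonal (fun i => if i ∈ S then (1 : ℝ) else 0) *ᵥ v = restr S v := by
  funext i
  by_cases hi : i ∈ S <;> simp [mulVec_diagonal, restr, hi]

lemma dotProduct_vecMulVec_mulVec {m R : Type*} [Fintype m] [CommSemiring R]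
    (u a b v : m → R) : u ⬝ᵥ vecMulVec a b *ᵥ v = (u ⬝ᵥ a) * (b ⬝ᵥ v) := by
  rw [vecMulVec_mulVec, op_smul_eq_smul, dotProduct_smul, smul_eq_mul, mul_comm]

lemma dotProduct_smul_sum_vecMulVec_restr_mulVec {n p : ℕ} {S : Finset (Fin p)}
    {u v : Fin p → ℝ} (hu : Function.support u ⊆ S) (hv : Function.support v ⊆ S)
    (c : ℝ) (a : Fin n → ℝ) (x : Fin n → Fin p → ℝ) :
    u ⬝ᵥ (c • ∑ j, a j • vecMulVec (restr S (x j)) (restr S (x j))) *ᵥ v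
      = c * ∑ j, dot (x j) u * dot (x j) v * a j := by
  simp only [smul_mulVec, sum_mulVec, dotProduct_smul, dotProduct_sum, smul_eq_mul,
    dotProduct_vecMulVec_mulVec]
  congr 1
  refine Finset.sum_congr rfl fun j _ => ?_
  rw [dotProduct_comm u, restr_dotProduct, restr_dotProduct, restr_eq_self hu,
    restr_eq_self hv, dot_eq_dotProduct, dot_eq_dotProduct]
  ring

lemma restricted_fisherM_mulVec {p : ℕ} {S : Finset (Fin p)} (b : Fin p → ℝ) {v : Fin p → ℝ}
    (hv : Function.support v ⊆ S) :
    (nrm b ^ 2 • diagonal (fun i => if i ∈ S then (1 : ℝ) else 0) + (2 : ℝ) • vecMulVec b b)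
      *ᵥ v = fisherM b *ᵥ v := by
  simp only [fisherM, add_mulVec, smul_mulVec, one_mulVec, diagonal_indicator_mulVec,
    restr_eq_self hv]

theorem stmt_12_general {n p : ℕ} (δ : ℝ) (Sb : Finset (Fin p))
    (x : Fin n → Fin p → ℝ) (β Δ : Fin p → ℝ) (hβ : β ≠ 0) (k : Fin p)
    (hΔS : Function.support Δ ⊆ (Sb : Set (Fin p)))
    (hwS : Function.support (wvec β k) ⊆ (Sb : Set (Fin p)))
    (hop : opNorm ((1/(n:ℝ)) • ∑ j, (dot (x j) β ^ 2) •
          Matrix.vecMulVec (restr Sb (x j)) (restr Sb (x j))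
        - ((nrm β ^ 2) • Matrix.diagonal (fun i => if i ∈ Sb then (1:ℝ) else 0)
            + (2:ℝ) • Matrix.vecMulVec β β))
      ≤ δ * nrm β ^ 2) :
    |Δ k + (2/(n:ℝ)) * ∑ j, dot (x j) Δ * dot (x j) (wvec β k) * dot (x j) β ^ 2|
      ≤ 2 * δ * nrm β ^ 2 * nrm Δ * nrm (wvec β k) := by
  set w := wvec β k
  set M : Matrix (Fin p) (Fin p) ℝ := (1/(n:ℝ)) • ∑ j, (dot (x j) β ^ 2) •
          Matrix.vecMulVec (restr Sb (x j)) (restr Sb (x j))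
        - ((nrm β ^ 2) • Matrix.diagonal (fun i => if i ∈ Sb then (1:ℝ) else 0)
            + (2:ℝ) • Matrix.vecMulVec β β)
  have hFisher : Δ ⬝ᵥ ((nrm β ^ 2) • diagonal (fun i => if i ∈ Sb then (1:ℝ) else 0)
      + (2:ℝ) • vecMulVec β β) *ᵥ w = -(1 / 2) * Δ k := by
    rw [restricted_fisherM_mulVec β hwS, fisherM_mulVec_wvec hβ, dotProduct_smul,
      dotProduct_single_one, smul_eq_mul]
  have hError : Δ k + (2 / (n:ℝ)) * ∑ j, dot (x j) Δ * dot (x j) w * dot (x j) β ^ 2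
      = 2 * (Δ ⬝ᵥ M *ᵥ w) := by
    rw [sub_mulVec, dotProduct_sub, hFisher,
      dotProduct_smul_sum_vecMulVec_restr_mulVec hΔS hwS]
    ring
  calc _ = 2 * |Δ ⬝ᵥ M *ᵥ w| := by rw [hError, abs_mul, abs_two]
    _ ≤ 2 * (opNorm M * nrm Δ * nrm w) := by
        gcongr; exact abs_dotProduct_mulVec_le_opNorm M Δ w
    _ ≤ 2 * (δ * nrm β ^ 2 * nrm Δ * nrm w) := by gcongr <;> apply nrm_nonneg
    _ = 2 * δ * nrm β ^ 2 * nrm Δ * nrm w := by ring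

/-- Deterministic bound on the first two terms of the error decomposition,
conditional on the empirical-Hessian concentration event:
`|e_kᵀΔ + (2/n) ∑ⱼ (xⱼᵀΔ)(xⱼᵀw_k(β))(xⱼᵀβ)²| ≤ 2δ‖β‖₂²‖Δ‖₂‖w_k(β)‖₂`. -/
theorem stmt_12 {n p : ℕ} (hn : 0 < n) (δ : ℝ) (hδ : 0 < δ) (Sb : Finset (Fin p))
    (x : Fin n → Fin p → ℝ) (β Δ : Fin p → ℝ) (hβ : β ≠ 0) (k : Fin p)
    (hΔS : Function.support Δ ⊆ (Sb : Set (Fin p)))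
    (hwS : Function.support (wvec β k) ⊆ (Sb : Set (Fin p)))
    (hβS : Function.support β ⊆ (Sb : Set (Fin p)))
    (hop : opNorm ((1/(n:ℝ)) • ∑ j, (dot (x j) β ^ 2) •
          Matrix.vecMulVec (restr Sb (x j)) (restr Sb (x j))
        - ((nrm β ^ 2) • Matrix.diagonal (fun i => if i ∈ Sb then (1:ℝ) else 0)
            + (2:ℝ) • Matrix.vecMulVec β β))
      ≤ δ * nrm β ^ 2) :
    |Δ k + (2/(n:ℝ)) * ∑ j, dot (x j) Δ * dot (x j) (wvec β k) * dot (x j) β ^ 2|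
      ≤ 2 * δ * nrm β ^ 2 * nrm Δ * nrm (wvec β k) :=
  stmt_12_general δ Sb x β Δ hβ k hΔS hwS hop
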